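/- arXiv:1611.00498 — 10 statements merged into one kernel-verified Lean document; each statement's English description precedes it below -/
import Mathlib

section
/- Let F and G be the matrices defined from Γ and σ. Then F^{βγ} = G^{βγ} holds for every pair (β,γ) with 1 ≤ β,γ ≤ d if and only if the trilinear condition holds, i.e. Γ̂^α_{βγ} = Γ̂^α_{γβ} = Γ̂^β_{γα} for all 1 ≤ α,β,γ ≤ d. -/
/-!
Store a tensor `T^a_{bc}` as the matrix `flatten T` with rows indexed by `a` and columns by
`(b, c)`. With `M = flatten Γ̂` one has `flatten E = σ M`, hence `F = σ (M Mᵀ) σᵀ` and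
`G = σ (M R) σᵀ`, where `R = exchangeRowFst M` is `Γ̂` read with rows `(a, c)` and column `b`.
Since `σ` is invertible, `F = G` iff `M Mᵀ = M R`. As `R` has the same entries as `Mᵀ`,
`‖Mᵀ - R‖² = 2 tr (M Mᵀ - M R)`, so this holds iff `Mᵀ = R`, i.e. iff `Γ̂` is symmetric in its
first two indices. Combined with the symmetry in the lower indices inherited from `Γ`, this is
the trilinear condition.
-/

open Matrix Kronecker Finset

namespace Matrix

variable {R : Type*} {l m n o : Type*}

def flatten (T : m → n → o → R) : Matrix m (n × o) R := of fun a p => T a p.1 p.2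

def exchangeRowFst (M : Matrix m (n × o) R) : Matrix (m × o) n R := of fun p b => M p.1 (b, p.2)

@[simp] lemma flatten_apply (T : m → n → o → R) (a : m) (b : n) (c : o) :
    flatten T a (b, c) = T a b c := rfl

@[simp] lemma exchangeRowFst_apply (M : Matrix m (n × o) R) (a : m) (b : n) (c : o) :
    exchangeRowFst M (a, c) b = M a (b, c) := rfl

lemma exchangeRowFst_mul [CommSemiring R] [Fintype m] [Fintype o] [DecidableEq o] (P : Matrix m m R)
    (M : Matrix m (n × o) R) :
    exchangeRowFst (P * M) = (P ⊗ₖ (1 : Matrix o o R)) * exchangeRowFst M := by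
  ext ⟨a, c⟩ b
  simp [mul_apply, Fintype.sum_prod_type, one_apply]

lemma trace_transpose_exchangeRowFst_mul_self [CommSemiring R] [Fintype m] [Fintype n]
    [Fintype o] (M : Matrix m (n × o) R) :
    ((exchangeRowFst M)ᵀ * exchangeRowFst M).trace = (M * Mᵀ).trace := by
  simp only [trace, diag, mul_apply, transpose_apply, Fintype.sum_prod_type, exchangeRowFst_apply]
  exact sum_comm

lemma mul_transpose_eq_mul_exchangeRowFst_iff [Fintype m] [Fintype o]
    (M : Matrix m (m × o) ℝ) : M * Mᵀ = M * exchangeRowFst M ↔ Mᵀ = exchangeRowFst M := by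
  refine ⟨fun h => ?_, fun h => by rw [h]⟩
  set R := exchangeRowFst M
  have hD : ((M - Rᵀ) * (M - Rᵀ)ᴴ).trace = 0 := by
    rw [conjTranspose_eq_transpose_of_trivial, transpose_sub, transpose_transpose,
      Matrix.sub_mul, Matrix.mul_sub, Matrix.mul_sub, ← transpose_mul, trace_sub, trace_sub,
      trace_sub, trace_transpose, ← h, trace_transpose_exchangeRowFst_mul_self]
    ring
  rw [trace_mul_conjTranspose_self_eq_zero_iff, sub_eq_zero] at hD
  rw [hD, transpose_transpose]

lemma transpose_flatten_eq_exchangeRowFst_iff (T : m → m → o → R) :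
    (flatten T)ᵀ = exchangeRowFst (flatten T) ↔ ∀ a b c, T a b c = T b a c := by
  simp only [← Matrix.ext_iff, Prod.forall, transpose_apply, flatten_apply, exchangeRowFst_apply]
  exact ⟨fun h a b c => h b c a, fun h b c a => h a b c⟩

lemma flatten_mul_kronecker_apply [CommSemiring R] [Fintype n] [Fintype o] {n' o' : Type*}
    (T : m → n → o → R) (A : Matrix n n' R) (B : Matrix o o' R) (a : m) (b : n') (c : o') :
    (flatten T * (A ⊗ₖ B)) a (b, c) = ∑ x, ∑ y, T a x y * A x b * B y c := by
  simp [mul_apply, Fintype.sum_prod_type, mul_assoc]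

lemma mul_flatten_mul_kronecker_apply [CommSemiring R] [Fintype m] [Fintype n] [Fintype o]
    {n' o' : Type*} (P : Matrix l m R) (T : m → n → o → R) (A : Matrix n n' R)
    (B : Matrix o o' R) (a : l) (b : n') (c : o') :
    (P * flatten T * (A ⊗ₖ B)) a (b, c) = ∑ a', ∑ x, ∑ y, P a a' * T a' x y * A x b * B y c := by
  simp [Matrix.mul_assoc, mul_apply (M := P), flatten_mul_kronecker_apply, mul_sum, mul_assoc]

lemma mul_flatten_mul_kronecker_self_apply_swap [CommSemiring R] [Fintype m] [Fintype n]
    {n' : Type*} (P : Matrix l m R) {T : m → n → n → R} (hT : ∀ a x y, T a x y = T a y x)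
    (A : Matrix n n' R) (a : l) (b c : n') :
    (P * flatten T * (A ⊗ₖ A)) a (b, c) = (P * flatten T * (A ⊗ₖ A)) a (c, b) := by
  simp only [mul_flatten_mul_kronecker_apply]
  refine sum_congr rfl fun a' _ => ?_
  rw [sum_comm]
  refine sum_congr rfl fun y _ => sum_congr rfl fun x _ => ?_
  rw [hT]
  ring

lemma flatten_mul_transpose_flatten_apply [CommSemiring R] [Fintype n] [Fintype o]
    (S : l → n → o → R) (T : m → n → o → R) (a : l) (b : m) :
    (flatten S * (flatten T)ᵀ) a b = ∑ x, ∑ y, S a x y * T b x y := by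
  simp [mul_apply, Fintype.sum_prod_type]

lemma flatten_mul_one_kronecker_apply [CommSemiring R] [Fintype n] [Fintype o] [DecidableEq n]
    {o' : Type*} (T : m → n → o → R) (A : Matrix o o' R) (a : m) (x : n) (c : o') :
    (flatten T * ((1 : Matrix n n R) ⊗ₖ A)) a (x, c) = ∑ y, T a x y * A y c := by
  simp [mul_apply, Fintype.sum_prod_type_right, one_apply]

lemma flatten_mul_one_kronecker_mul_exchangeRowFst_mul_transpose_apply [CommSemiring R]
    [Fintype n] [Fintype o] [DecidableEq n] {o' p q : Type*} [Fintype o'] [Fintype p]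
    (T : m → n → o → R) (A : Matrix o o' R) (S : n → p → o' → R) (B : Matrix q p R)
    (a : m) (b : q) :
    (flatten T * ((1 : Matrix n n R) ⊗ₖ A) * exchangeRowFst (flatten S) * Bᵀ) a b =
      ∑ β₁, ∑ β₂, ∑ γ₁, ∑ γ₂, T a γ₁ γ₂ * S γ₁ β₁ β₂ * A γ₂ β₂ * B b β₁ := by
  rw [mul_apply]
  refine sum_congr rfl fun β₁ _ => ?_
  rw [transpose_apply, mul_apply, Fintype.sum_prod_type, sum_comm, sum_mul]
  refine sum_congr rfl fun β₂ _ => ?_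
  rw [sum_mul]
  refine sum_congr rfl fun γ₁ _ => ?_
  simp only [flatten_mul_one_kronecker_apply, exchangeRowFst_apply, flatten_apply, sum_mul]
  exact sum_congr rfl fun γ₂ _ => by ring

lemma mul_mul_transpose_inj_of_mul_eq_one [CommSemiring R] [Fintype m] [DecidableEq m]
    {σ τ : Matrix m m R} (h : τ * σ = 1) {A B : Matrix m m R} :
    σ * A * σᵀ = σ * B * σᵀ ↔ A = B := by
  refine ⟨fun hAB => ?_, fun hAB => by rw [hAB]⟩
  have hσ : ∀ C : Matrix m m R, C = τ * (σ * C * σᵀ) * τᵀ := fun C => by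
    calc C = τ * σ * C * (τ * σ)ᵀ := by rw [h, transpose_one, Matrix.one_mul, Matrix.mul_one]
      _ = τ * (σ * C * σᵀ) * τᵀ := by simp only [transpose_mul, Matrix.mul_assoc]
  rw [hσ A, hσ B, hAB]

end Matrix

lemma forall_swap_left_iff_of_swap_right {ι α : Type*} {T : ι → ι → ι → α}
    (hT : ∀ a b c, T a b c = T a c b) :
    (∀ a b c, T a b c = T b a c) ↔ ∀ a b c, T a b c = T a c b ∧ T a b c = T b c a :=
  ⟨fun h a b c => ⟨hT a b c, (h a b c).trans (hT b a c)⟩,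
    fun h a b c => (h a b c).2.trans (hT b c a)⟩

theorem stmt_0_general (d : ℕ)
    (Γ : Fin d → Fin d → Fin d → ℝ)
    (hΓsym : ∀ α β γ, Γ α β γ = Γ α γ β)
    (σ τ : Matrix (Fin d) (Fin d) ℝ)
    (hστ : σ * τ = 1) (hτσ : τ * σ = 1)
    (Γhat : Fin d → Fin d → Fin d → ℝ)
    (hΓhat : ∀ α β γ, Γhat α β γ =
      ∑ α', ∑ β', ∑ γ', τ α α' * Γ α' β' γ' * σ β' β * σ γ' γ)
    (E : Fin d → Fin d → Fin d → ℝ)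
    (hE : ∀ α β₁ β₂, E α β₁ β₂ = ∑ γ₁, ∑ γ₂, Γ α γ₁ γ₂ * σ γ₁ β₁ * σ γ₂ β₂)
    (F G : Fin d → Fin d → ℝ)
    (hF : ∀ β γ, F β γ = ∑ γ₁, ∑ γ₂, E β γ₁ γ₂ * E γ γ₁ γ₂)
    (hG : ∀ β γ, G β γ = ∑ β₁, ∑ β₂, ∑ γ₁, ∑ γ₂,
      Γ β γ₁ γ₂ * E γ₁ β₁ β₂ * σ γ₂ β₂ * σ γ β₁) :
    (∀ β γ, F β γ = G β γ) ↔
      (∀ α β γ, Γhat α β γ = Γhat α γ β ∧ Γhat α β γ = Γhat β γ α) := by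
  have hM : flatten Γhat = τ * flatten Γ * (σ ⊗ₖ σ) := by
    ext α ⟨β, γ⟩
    rw [flatten_apply, hΓhat, mul_flatten_mul_kronecker_apply]
  have hEΓ : flatten E = flatten Γ * (σ ⊗ₖ σ) := by
    ext α ⟨β, γ⟩
    rw [flatten_apply, hE, flatten_mul_kronecker_apply]
  have hEM : flatten E = σ * flatten Γhat := by
    rw [hEΓ, hM, ← Matrix.mul_assoc, ← Matrix.mul_assoc, hστ, Matrix.one_mul]
  have hFM : F = σ * (flatten Γhat * (flatten Γhat)ᵀ) * σᵀ := by
    ext β γ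
    rw [hF, ← flatten_mul_transpose_flatten_apply, hEM, transpose_mul]
    simp only [Matrix.mul_assoc]
  have hGM : G = σ * (flatten Γhat * exchangeRowFst (flatten Γhat)) * σᵀ := by
    have hGE : G = flatten Γ * ((1 : Matrix (Fin d) (Fin d) ℝ) ⊗ₖ σ) *
        exchangeRowFst (flatten E) * σᵀ := by
      ext β γ
      rw [hG, flatten_mul_one_kronecker_mul_exchangeRowFst_mul_transpose_apply]
    rw [hGE, hEM, exchangeRowFst_mul, ← Matrix.mul_assoc, Matrix.mul_assoc (flatten Γ),
      ← mul_kronecker_mul, Matrix.one_mul, Matrix.mul_one, ← hEΓ, hEM, Matrix.mul_assoc σ]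
  have hsymm : ∀ α β γ, Γhat α β γ = Γhat α γ β := fun α β γ => by
    rw [← flatten_apply Γhat, ← flatten_apply Γhat, hM]
    exact mul_flatten_mul_kronecker_self_apply_swap τ hΓsym σ α β γ
  rw [← forall_swap_left_iff_of_swap_right hsymm, ← transpose_flatten_eq_exchangeRowFst_iff,
    ← mul_transpose_eq_mul_exchangeRowFst_iff, ← mul_mul_transpose_inj_of_mul_eq_one hτσ,
    ← hFM, ← hGM]
  exact Matrix.ext_iff

theorem stmt_0 (d : ℕ) (hd : 1 ≤ d)
    (Γ : Fin d → Fin d → Fin d → ℝ)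
    (hΓsym : ∀ α β γ, Γ α β γ = Γ α γ β)
    (σ τ : Matrix (Fin d) (Fin d) ℝ)
    (hστ : σ * τ = 1) (hτσ : τ * σ = 1)
    (Γhat : Fin d → Fin d → Fin d → ℝ)
    (hΓhat : ∀ α β γ, Γhat α β γ =
      ∑ α', ∑ β', ∑ γ', τ α α' * Γ α' β' γ' * σ β' β * σ γ' γ)
    (E : Fin d → Fin d → Fin d → ℝ)
    (hE : ∀ α β₁ β₂, E α β₁ β₂ = ∑ γ₁, ∑ γ₂, Γ α γ₁ γ₂ * σ γ₁ β₁ * σ γ₂ β₂)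
    (F G : Fin d → Fin d → ℝ)
    (hF : ∀ β γ, F β γ = ∑ γ₁, ∑ γ₂, E β γ₁ γ₂ * E γ γ₁ γ₂)
    (hG : ∀ β γ, G β γ = ∑ β₁, ∑ β₂, ∑ γ₁, ∑ γ₂,
      Γ β γ₁ γ₂ * E γ₁ β₁ β₂ * σ γ₂ β₂ * σ γ β₁) :
    (∀ β γ, F β γ = G β γ) ↔
      (∀ α β γ, Γhat α β γ = Γhat α γ β ∧ Γhat α β γ = Γhat β γ α) :=
  stmt_0_general d Γ hΓsym σ τ hστ hτσ Γhat hΓhat E hE F G hF hG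
end

section
/- Let a = (a^α_{βγ})_{1≤α,β,γ≤d} be a real tensor satisfying a^α_{βγ} = a^α_{γβ}. If Σ_{β,β₁,β₂} a^β_{β₁β₂}( a^{β₁}_{ββ₂} − a^β_{β₁β₂} ) = 0, then a^{β₁}_{ββ₂} = a^β_{β₁β₂} for all 1 ≤ β,β₁,β₂ ≤ d. -/
/-! Write `b β β₁ β₂ = a β₁ β β₂`. Since `b` is a rearrangement of `a`, both have the same
sum of squares, so `∑ (b - a)² = ∑ b² - ∑ a² - 2 ∑ a (b - a) = -2 ∑ a (b - a) = 0`. -/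

theorem eq_of_sum_sq_eq_of_sum_mul_sub_eq_zero {ι : Type*} [Fintype ι] {f g : ι → ℝ}
    (hsq : ∑ i, g i ^ 2 = ∑ i, f i ^ 2) (h : ∑ i, f i * (g i - f i) = 0) : f = g := by
  have hdist : ∑ i, (g i - f i) ^ 2 = 0 := by
    calc ∑ i, (g i - f i) ^ 2
        = ∑ i, g i ^ 2 - ∑ i, f i ^ 2 - 2 * ∑ i, f i * (g i - f i) := by
          simp only [Finset.mul_sum, ← Finset.sum_sub_distrib]
          exact Finset.sum_congr rfl fun i _ => by ring
      _ = 0 := by rw [hsq, h]; ring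
  have hsq_zero := (Fintype.sum_eq_zero_iff_of_nonneg fun i => sq_nonneg (g i - f i)).mp hdist
  funext i
  exact (sub_eq_zero.mp (pow_eq_zero_iff two_ne_zero |>.mp (congrFun hsq_zero i))).symm

theorem stmt_3_general (d : ℕ)
    (a : Fin d → Fin d → Fin d → ℝ)
    (h : ∑ β, ∑ β₁, ∑ β₂, a β β₁ β₂ * (a β₁ β β₂ - a β β₁ β₂) = 0) :
    ∀ β β₁ β₂, a β₁ β β₂ = a β β₁ β₂ := by
  have key : (fun i : Fin d × Fin d × Fin d => a i.1 i.2.1 i.2.2) =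
      fun i => a i.2.1 i.1 i.2.2 :=
    eq_of_sum_sq_eq_of_sum_mul_sub_eq_zero
      (by simp only [Fintype.sum_prod_type]; exact Finset.sum_comm)
      (by simpa only [Fintype.sum_prod_type] using h)
  exact fun β β₁ β₂ => (congrFun key (β, β₁, β₂)).symm

theorem stmt_3 (d : ℕ) (hd : 1 ≤ d)
    (a : Fin d → Fin d → Fin d → ℝ)
    (hsym : ∀ α β γ, a α β γ = a α γ β)
    (h : ∑ β, ∑ β₁, ∑ β₂, a β β₁ β₂ * (a β₁ β β₂ - a β β₁ β₂) = 0) :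
    ∀ β β₁ β₂, a β₁ β β₂ = a β β₁ β₂ :=
  stmt_3_general d a h
end

section
/- The trilinear condition Γ̂^α_{βγ} = Γ̂^α_{γβ} = Γ̂^β_{γα} (for all α,β,γ) holds if and only if the lowered tensor Γ̃ is fully symmetric, i.e. Γ̃_{αβγ} = Γ̃_{αγβ} = Γ̃_{βαγ} for all 1 ≤ α,β,γ ≤ d. -/
/-!
Since `A⁻¹ = τᵀ τ`, we have `σᵀ A⁻¹ = τ`, so `Γ̂` is the pullback of `Γ̃` by `σ` in all three
slots, and `Γ̃` is in turn the pullback of `Γ̂` by `τ = σ⁻¹`. A simultaneous pullback of all three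
slots preserves every permutation symmetry. Both tensors are symmetric in their last two slots,
and for such a tensor cyclic symmetry and symmetry in the first two slots each amount to full
symmetry.
-/

open Matrix Finset

theorem Finset.sum_sum_sum_comm {R n : Type*} [AddCommMonoid R] [Fintype n]
    (f : n → n → n → n → n → n → R) :
    ∑ a, ∑ b, ∑ c, ∑ a', ∑ b', ∑ c', f a b c a' b' c' =
      ∑ a', ∑ b', ∑ c', ∑ a, ∑ b, ∑ c, f a b c a' b' c' := by
  have h := sum_comm (s := (univ : Finset (n × n × n))) (t := univ)
    (f := fun x y : n × n × n => f x.1 x.2.1 x.2.2 y.1 y.2.1 y.2.2)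
  simpa only [Fintype.sum_prod_type] using h

namespace Tensor3

section Symmetry

variable {n R : Type*} {T : n → n → n → R}

theorem cycle_iff_comm₁₂ (hT : ∀ a b c, T a b c = T a c b) :
    (∀ a b c, T a b c = T b c a) ↔ ∀ a b c, T a b c = T b a c :=
  ⟨fun h a b c => by rw [h b a c, hT], fun h a b c => by rw [h, hT]⟩

end Symmetry

variable {R : Type*} [CommSemiring R] {n : Type*} [Fintype n]

def pullback (M : Matrix n n R) (T : n → n → n → R) : n → n → n → R :=
  fun α β γ => ∑ a, ∑ b, ∑ c, M a α * M b β * M c γ * T a b c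

theorem pullback_one [DecidableEq n] (T : n → n → n → R) : pullback 1 T = T := by
  ext α β γ
  simp [pullback, one_apply]

theorem pullback_pullback (M N : Matrix n n R) (T : n → n → n → R) :
    pullback N (pullback M T) = pullback (M * N) T := by
  ext α β γ
  simp only [pullback, Finset.mul_sum]
  rw [sum_sum_sum_comm]
  refine sum_congr rfl fun a' _ => sum_congr rfl fun b' _ => sum_congr rfl fun c' _ => ?_
  calc _ = ∑ a, ∑ b, ∑ c,
        M a' a * N a α * (M b' b * N b β) * (M c' c * N c γ) * T a' b' c' :=
        sum_congr rfl fun a _ => sum_congr rfl fun b _ => sum_congr rfl fun c _ => by ring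
    _ = _ := by simp only [mul_apply, ← Finset.sum_mul, ← Finset.mul_sum]

theorem pullback_comm₂₃ (M : Matrix n n R) {T : n → n → n → R}
    (hT : ∀ a b c, T a b c = T a c b) (α β γ : n) :
    pullback M T α β γ = pullback M T α γ β := by
  simp only [pullback]
  refine sum_congr rfl fun a _ => ?_
  rw [sum_comm]
  refine sum_congr rfl fun c _ => sum_congr rfl fun b _ => ?_
  rw [hT]; ring

theorem pullback_cycle (M : Matrix n n R) {T : n → n → n → R}
    (hT : ∀ a b c, T a b c = T b c a) (α β γ : n) :
    pullback M T α β γ = pullback M T β γ α := by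
  simp only [pullback]
  rw [sum_comm]
  refine sum_congr rfl fun b _ => ?_
  rw [sum_comm]
  refine sum_congr rfl fun c _ => sum_congr rfl fun a _ => ?_
  rw [hT]; ring

theorem pullback_contract (σ B : Matrix n n R) (Γ : n → n → n → R) (α β γ : n) :
    pullback σ (fun a b c => ∑ a', B a a' * Γ a' b c) α β γ =
      ∑ α', ∑ β', ∑ γ', (σᵀ * B) α α' * Γ α' β' γ' * σ β' β * σ γ' γ := by
  simp only [pullback, mul_apply, transpose_apply, Finset.mul_sum, Finset.sum_mul]
  rw [sum_comm]; conv_rhs => rw [sum_comm]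
  refine sum_congr rfl fun b _ => ?_
  rw [sum_comm]; conv_rhs => rw [sum_comm]
  refine sum_congr rfl fun c _ => ?_
  rw [sum_comm]
  exact sum_congr rfl fun a' _ => sum_congr rfl fun a _ => by ring

end Tensor3

open Tensor3

theorem stmt_4_general (d : ℕ)
    (Γ : Fin d → Fin d → Fin d → ℝ)
    (hΓsym : ∀ α β γ, Γ α β γ = Γ α γ β)
    (σ τ : Matrix (Fin d) (Fin d) ℝ)
    (hστ : σ * τ = 1)
    (Γhat : Fin d → Fin d → Fin d → ℝ)
    (hΓhat : ∀ α β γ, Γhat α β γ =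
      ∑ α', ∑ β', ∑ γ', τ α α' * Γ α' β' γ' * σ β' β * σ γ' γ)
    (A : Matrix (Fin d) (Fin d) ℝ)
    (hA : ∀ α β, A α β = ∑ δ, σ α δ * σ β δ)
    (Γtilde : Fin d → Fin d → Fin d → ℝ)
    (hΓtilde : ∀ α β γ, Γtilde α β γ = ∑ α', A⁻¹ α α' * Γ α' β γ) :
    (∀ α β γ, Γhat α β γ = Γhat α γ β ∧ Γhat α β γ = Γhat β γ α) ↔
      (∀ α β γ, Γtilde α β γ = Γtilde α γ β ∧ Γtilde α β γ = Γtilde β α γ) := by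
  have hτσ : τ * σ = 1 := mul_eq_one_comm.mp hστ
  have hA' : A = σ * σᵀ := by ext α β; simp [hA, mul_apply]
  have hAinv : A⁻¹ = τᵀ * τ := inv_eq_right_inv <| by
    rw [hA', Matrix.mul_assoc, ← Matrix.mul_assoc σᵀ, ← transpose_mul, hτσ, transpose_one,
      Matrix.one_mul, hστ]
  have hσA : σᵀ * A⁻¹ = τ := by
    rw [hAinv, ← Matrix.mul_assoc, ← transpose_mul, hτσ, transpose_one, Matrix.one_mul]
  have htilde₂₃ : ∀ α β γ, Γtilde α β γ = Γtilde α γ β := fun α β γ => by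
    simp only [hΓtilde, hΓsym _ β γ]
  have hhat : Γhat = pullback σ Γtilde := by
    ext α β γ
    rw [hΓhat, show Γtilde = _ from funext₃ hΓtilde, pullback_contract, hσA]
  have htilde : Γtilde = pullback τ Γhat := by
    rw [hhat, pullback_pullback, hστ, pullback_one]
  constructor
  · intro h α β γ
    refine ⟨htilde₂₃ α β γ, (cycle_iff_comm₁₂ htilde₂₃).mp ?_ α β γ⟩
    rw [htilde]
    exact pullback_cycle τ fun a b c => (h a b c).2
  · intro h α β γ
    have hcycle := (cycle_iff_comm₁₂ htilde₂₃).mpr fun a b c => (h a b c).2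
    rw [hhat]
    exact ⟨pullback_comm₂₃ σ htilde₂₃ α β γ, pullback_cycle σ hcycle α β γ⟩

theorem stmt_4 (d : ℕ) (hd : 1 ≤ d)
    (Γ : Fin d → Fin d → Fin d → ℝ)
    (hΓsym : ∀ α β γ, Γ α β γ = Γ α γ β)
    (σ τ : Matrix (Fin d) (Fin d) ℝ)
    (hστ : σ * τ = 1) (hτσ : τ * σ = 1)
    (Γhat : Fin d → Fin d → Fin d → ℝ)
    (hΓhat : ∀ α β γ, Γhat α β γ =
      ∑ α', ∑ β', ∑ γ', τ α α' * Γ α' β' γ' * σ β' β * σ γ' γ)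
    (A : Matrix (Fin d) (Fin d) ℝ)
    (hA : ∀ α β, A α β = ∑ δ, σ α δ * σ β δ)
    (Γtilde : Fin d → Fin d → Fin d → ℝ)
    (hΓtilde : ∀ α β γ, Γtilde α β γ = ∑ α', A⁻¹ α α' * Γ α' β γ) :
    (∀ α β γ, Γhat α β γ = Γhat α γ β ∧ Γhat α β γ = Γhat β γ α) ↔
      (∀ α β γ, Γtilde α β γ = Γtilde α γ β ∧ Γtilde α β γ = Γtilde β α γ) :=
  stmt_4_general d Γ hΓsym σ τ hστ Γhat hΓhat A hA Γtilde hΓtilde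
end

section
/- The equality Σ_{β,γ} Γ^α_{βγ} F^{βγ} = Σ_{β,γ} Γ^α_{βγ} G^{βγ} holds for every 1 ≤ α ≤ d if and only if Σ_{α₁,α₂,α₃,α₄} Γ̂^α_{α₁α₂} Γ̂^{α₁}_{α₃α₄} Γ̂^{α₂}_{α₃α₄} = Σ_{α₁,α₂,α₃,α₄} Γ̂^α_{α₁α₂} Γ̂^{α₁}_{α₃α₄} Γ̂^{α₃}_{α₂α₄} holds for every 1 ≤ α ≤ d. -/
/-!
With `E^a = σᵀ Γ^a σ` the pulled-back bilinear forms, the transformed tensor is `Γ̂ = τ E`, so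
contracting the upper index of `Γ̂` against `σ` gives back `E`. Expanding the outer factor
`Γ̂^α_{α₁α₂}` of either cubic expression and contracting its lowered indices with the other two
factors turns the left cubic sum into `(τ (Γ · F))^α` and the right one into `(τ (Γ · G))^α`.
As `τ` is invertible, the two families of identities are equivalent.
-/

open Finset Matrix

theorem sum_comm₂₂ {ι κ M : Type*} [Fintype ι] [Fintype κ] [AddCommMonoid M]
    (f : ι → ι → κ → κ → M) :
    ∑ i, ∑ j, ∑ k, ∑ l, f i j k l = ∑ k, ∑ l, ∑ i, ∑ j, f i j k l := by
  rw [sum_comm_cycle]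
  exact sum_congr rfl fun _ _ => sum_comm_cycle

variable {ι R : Type*} [Fintype ι] [CommSemiring R]

theorem sum_pullback_mul (T X : ι → ι → R) (σ : Matrix ι ι R) :
    ∑ β, ∑ γ, (∑ b, ∑ c, T b c * σ b β * σ c γ) * X β γ =
      ∑ b, ∑ c, T b c * ∑ β, ∑ γ, σ b β * σ c γ * X β γ := by
  simp only [sum_mul, mul_sum, mul_assoc]
  exact sum_comm₂₂ _

theorem forall_mulVec_apply_eq_iff [DecidableEq ι] {σ τ : Matrix ι ι R} (hστ : σ * τ = 1)
    (v w : ι → R) : (∀ α, (τ *ᵥ v) α = (τ *ᵥ w) α) ↔ ∀ α, v α = w α := by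
  have hinv : Function.LeftInverse σ.mulVec τ.mulVec := fun v => by
    rw [mulVec_mulVec, hστ, one_mulVec]
  simp only [← funext_iff, hinv.injective.eq_iff]

section

variable {Γ Γhat E : ι → ι → ι → R} {σ τ : Matrix ι ι R}

theorem hat_eq_sum_mul_pullback
    (hΓhat : ∀ α β γ, Γhat α β γ = ∑ α', ∑ β', ∑ γ', τ α α' * Γ α' β' γ' * σ β' β * σ γ' γ)
    (hE : ∀ α β₁ β₂, E α β₁ β₂ = ∑ γ₁, ∑ γ₂, Γ α γ₁ γ₂ * σ γ₁ β₁ * σ γ₂ β₂) (α β γ : ι) :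
    Γhat α β γ = ∑ a, τ α a * E a β γ := by
  simp only [hΓhat, hE, mul_sum, mul_assoc]

theorem sum_mul_hat_eq_pullback [DecidableEq ι] (hστ : σ * τ = 1)
    (hΓhat : ∀ α β γ, Γhat α β γ = ∑ α', ∑ β', ∑ γ', τ α α' * Γ α' β' γ' * σ β' β * σ γ' γ)
    (hE : ∀ α β₁ β₂, E α β₁ β₂ = ∑ γ₁, ∑ γ₂, Γ α γ₁ γ₂ * σ γ₁ β₁ * σ γ₂ β₂) (b x y : ι) :
    ∑ k, σ b k * Γhat k x y = E b x y := by
  have h : (σ *ᵥ τ *ᵥ fun a => E a x y) b = E b x y := by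
    rw [mulVec_mulVec, hστ, one_mulVec]
  simpa only [hat_eq_sum_mul_pullback hΓhat hE, mulVec, dotProduct] using h

theorem sum_hat_mul_eq_mulVec
    (hΓhat : ∀ α β γ, Γhat α β γ = ∑ α', ∑ β', ∑ γ', τ α α' * Γ α' β' γ' * σ β' β * σ γ' γ)
    (hE : ∀ α β₁ β₂, E α β₁ β₂ = ∑ γ₁, ∑ γ₂, Γ α γ₁ γ₂ * σ γ₁ β₁ * σ γ₂ β₂)
    (X : ι → ι → R) (α : ι) :
    ∑ β, ∑ γ, Γhat α β γ * X β γ =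
      (τ *ᵥ fun a => ∑ b, ∑ c, Γ a b c * ∑ β, ∑ γ, σ b β * σ c γ * X β γ) α := by
  simp only [hat_eq_sum_mul_pullback hΓhat hE, sum_mul, mulVec, dotProduct]
  rw [sum_comm_cycle]
  refine sum_congr rfl fun a _ => ?_
  simp_rw [mul_assoc (τ α a), ← mul_sum, hE, sum_pullback_mul]

theorem sum_pullback_hat_mul_hat [DecidableEq ι] (hστ : σ * τ = 1)
    (hΓhat : ∀ α β γ, Γhat α β γ = ∑ α', ∑ β', ∑ γ', τ α α' * Γ α' β' γ' * σ β' β * σ γ' γ)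
    (hE : ∀ α β₁ β₂, E α β₁ β₂ = ∑ γ₁, ∑ γ₂, Γ α γ₁ γ₂ * σ γ₁ β₁ * σ γ₂ β₂) (b c : ι) :
    ∑ β, ∑ γ, σ b β * σ c γ * ∑ β', ∑ γ', Γhat β β' γ' * Γhat γ β' γ' =
      ∑ γ₁, ∑ γ₂, E b γ₁ γ₂ * E c γ₁ γ₂ := by
  calc _ = ∑ β', ∑ γ', ∑ β, ∑ γ, σ b β * Γhat β β' γ' * (σ c γ * Γhat γ β' γ') := by
        simp only [mul_sum]
        rw [sum_comm₂₂]
        simp only [mul_mul_mul_comm]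
    _ = _ := by simp only [← sum_mul_sum, sum_mul_hat_eq_pullback hστ hΓhat hE]

theorem sum_pullback_hat_mul_hat_swap [DecidableEq ι] (hστ : σ * τ = 1)
    (hΓhat : ∀ α β γ, Γhat α β γ = ∑ α', ∑ β', ∑ γ', τ α α' * Γ α' β' γ' * σ β' β * σ γ' γ)
    (hE : ∀ α β₁ β₂, E α β₁ β₂ = ∑ γ₁, ∑ γ₂, Γ α γ₁ γ₂ * σ γ₁ β₁ * σ γ₂ β₂) (b c : ι) :
    ∑ β, ∑ γ, σ b β * σ c γ * ∑ β', ∑ γ', Γhat β β' γ' * Γhat β' γ γ' =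
      ∑ β₁, ∑ β₂, ∑ γ₁, ∑ γ₂, Γ b γ₁ γ₂ * E γ₁ β₁ β₂ * σ γ₂ β₂ * σ c β₁ := by
  calc _ = ∑ γ, σ c γ * ∑ β', ∑ γ', (∑ β, σ b β * Γhat β β' γ') * Γhat β' γ γ' := by
        simp only [mul_sum, sum_mul]
        rw [sum_comm]
        refine sum_congr rfl fun γ _ => ?_
        rw [← sum_comm_cycle]
        ac_rfl
    _ = ∑ γ, σ c γ * ∑ γ₁, ∑ γ₂, Γ b γ₁ γ₂ * ∑ β', ∑ γ', σ γ₁ β' * σ γ₂ γ' * Γhat β' γ γ' := by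
        simp only [sum_mul_hat_eq_pullback hστ hΓhat hE, hE, sum_pullback_mul]
    _ = ∑ γ, σ c γ * ∑ γ₁, ∑ γ₂, Γ b γ₁ γ₂ * ∑ γ', σ γ₂ γ' * E γ₁ γ γ' := by
        refine sum_congr rfl fun γ _ => congrArg _ <| sum_congr rfl fun γ₁ _ =>
          sum_congr rfl fun γ₂ _ => congrArg _ ?_
        rw [sum_comm]
        simp only [← sum_mul_hat_eq_pullback hστ hΓhat hE, mul_sum]
        ac_rfl
    _ = _ := by
        simp only [mul_sum]
        refine sum_congr rfl fun γ _ => ?_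
        rw [sum_comm_cycle]
        ac_rfl

theorem sum_hat_mul_hat_mul_hat_eq_mulVec [DecidableEq ι] {F : ι → ι → R} (hστ : σ * τ = 1)
    (hΓhat : ∀ α β γ, Γhat α β γ = ∑ α', ∑ β', ∑ γ', τ α α' * Γ α' β' γ' * σ β' β * σ γ' γ)
    (hE : ∀ α β₁ β₂, E α β₁ β₂ = ∑ γ₁, ∑ γ₂, Γ α γ₁ γ₂ * σ γ₁ β₁ * σ γ₂ β₂)
    (hF : ∀ β γ, F β γ = ∑ γ₁, ∑ γ₂, E β γ₁ γ₂ * E γ γ₁ γ₂) (α : ι) :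
    ∑ α₁, ∑ α₂, ∑ α₃, ∑ α₄, Γhat α α₁ α₂ * Γhat α₁ α₃ α₄ * Γhat α₂ α₃ α₄ =
      (τ *ᵥ fun a => ∑ β, ∑ γ, Γ a β γ * F β γ) α := by
  calc _ = ∑ α₁, ∑ α₂, Γhat α α₁ α₂ * ∑ α₃, ∑ α₄, Γhat α₁ α₃ α₄ * Γhat α₂ α₃ α₄ := by
        simp only [mul_sum, mul_assoc]
    _ = _ := by
        rw [sum_hat_mul_eq_mulVec hΓhat hE]
        simp only [sum_pullback_hat_mul_hat hστ hΓhat hE, hF]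

theorem sum_hat_mul_hat_mul_hat_swap_eq_mulVec [DecidableEq ι] {G : ι → ι → R}
    (hστ : σ * τ = 1)
    (hΓhat : ∀ α β γ, Γhat α β γ = ∑ α', ∑ β', ∑ γ', τ α α' * Γ α' β' γ' * σ β' β * σ γ' γ)
    (hE : ∀ α β₁ β₂, E α β₁ β₂ = ∑ γ₁, ∑ γ₂, Γ α γ₁ γ₂ * σ γ₁ β₁ * σ γ₂ β₂)
    (hG : ∀ β γ, G β γ = ∑ β₁, ∑ β₂, ∑ γ₁, ∑ γ₂, Γ β γ₁ γ₂ * E γ₁ β₁ β₂ * σ γ₂ β₂ * σ γ β₁)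
    (α : ι) :
    ∑ α₁, ∑ α₂, ∑ α₃, ∑ α₄, Γhat α α₁ α₂ * Γhat α₁ α₃ α₄ * Γhat α₃ α₂ α₄ =
      (τ *ᵥ fun a => ∑ β, ∑ γ, Γ a β γ * G β γ) α := by
  calc _ = ∑ α₁, ∑ α₂, Γhat α α₁ α₂ * ∑ α₃, ∑ α₄, Γhat α₁ α₃ α₄ * Γhat α₃ α₂ α₄ := by
        simp only [mul_sum, mul_assoc]
    _ = _ := by
        rw [sum_hat_mul_eq_mulVec hΓhat hE]
        simp only [sum_pullback_hat_mul_hat_swap hστ hΓhat hE, hG]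

end

theorem stmt_8_general (d : ℕ)
    (Γ : Fin d → Fin d → Fin d → ℝ)
    (σ τ : Matrix (Fin d) (Fin d) ℝ)
    (hστ : σ * τ = 1)
    (Γhat : Fin d → Fin d → Fin d → ℝ)
    (hΓhat : ∀ α β γ, Γhat α β γ =
      ∑ α', ∑ β', ∑ γ', τ α α' * Γ α' β' γ' * σ β' β * σ γ' γ)
    (E : Fin d → Fin d → Fin d → ℝ)
    (hE : ∀ α β₁ β₂, E α β₁ β₂ = ∑ γ₁, ∑ γ₂, Γ α γ₁ γ₂ * σ γ₁ β₁ * σ γ₂ β₂)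
    (F G : Fin d → Fin d → ℝ)
    (hF : ∀ β γ, F β γ = ∑ γ₁, ∑ γ₂, E β γ₁ γ₂ * E γ γ₁ γ₂)
    (hG : ∀ β γ, G β γ = ∑ β₁, ∑ β₂, ∑ γ₁, ∑ γ₂,
      Γ β γ₁ γ₂ * E γ₁ β₁ β₂ * σ γ₂ β₂ * σ γ β₁) :
    (∀ α, ∑ β, ∑ γ, Γ α β γ * F β γ = ∑ β, ∑ γ, Γ α β γ * G β γ) ↔
      (∀ α, ∑ α₁, ∑ α₂, ∑ α₃, ∑ α₄,
          Γhat α α₁ α₂ * Γhat α₁ α₃ α₄ * Γhat α₂ α₃ α₄ =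
        ∑ α₁, ∑ α₂, ∑ α₃, ∑ α₄,
          Γhat α α₁ α₂ * Γhat α₁ α₃ α₄ * Γhat α₃ α₂ α₄) := by
  simp only [sum_hat_mul_hat_mul_hat_eq_mulVec hστ hΓhat hE hF,
    sum_hat_mul_hat_mul_hat_swap_eq_mulVec hστ hΓhat hE hG]
  exact (forall_mulVec_apply_eq_iff hστ _ _).symm

theorem stmt_8 (d : ℕ) (hd : 1 ≤ d)
    (Γ : Fin d → Fin d → Fin d → ℝ)
    (hΓsym : ∀ α β γ, Γ α β γ = Γ α γ β)
    (σ τ : Matrix (Fin d) (Fin d) ℝ)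
    (hστ : σ * τ = 1) (hτσ : τ * σ = 1)
    (Γhat : Fin d → Fin d → Fin d → ℝ)
    (hΓhat : ∀ α β γ, Γhat α β γ =
      ∑ α', ∑ β', ∑ γ', τ α α' * Γ α' β' γ' * σ β' β * σ γ' γ)
    (E : Fin d → Fin d → Fin d → ℝ)
    (hE : ∀ α β₁ β₂, E α β₁ β₂ = ∑ γ₁, ∑ γ₂, Γ α γ₁ γ₂ * σ γ₁ β₁ * σ γ₂ β₂)
    (F G : Fin d → Fin d → ℝ)
    (hF : ∀ β γ, F β γ = ∑ γ₁, ∑ γ₂, E β γ₁ γ₂ * E γ γ₁ γ₂)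
    (hG : ∀ β γ, G β γ = ∑ β₁, ∑ β₂, ∑ γ₁, ∑ γ₂,
      Γ β γ₁ γ₂ * E γ₁ β₁ β₂ * σ γ₂ β₂ * σ γ β₁) :
    (∀ α, ∑ β, ∑ γ, Γ α β γ * F β γ = ∑ β, ∑ γ, Γ α β γ * G β γ) ↔
      (∀ α, ∑ α₁, ∑ α₂, ∑ α₃, ∑ α₄,
          Γhat α α₁ α₂ * Γhat α₁ α₃ α₄ * Γhat α₂ α₃ α₄ =
        ∑ α₁, ∑ α₂, ∑ α₃, ∑ α₄,
          Γhat α α₁ α₂ * Γhat α₁ α₃ α₄ * Γhat α₃ α₂ α₄) :=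
  stmt_8_general d Γ σ τ hστ Γhat hΓhat E hE F G hF hG
end

section
/- Let s be an invertible complex d×d matrix and define the complex tensor Γ̂^α_{βγ} := Σ_μ (s⁻¹)^α_μ s^μ_β s^μ_γ. Then for every 1 ≤ α ≤ d one has Σ_{α₁,α₂,α₃,α₄} Γ̂^α_{α₁α₂} Γ̂^{α₁}_{α₃α₄} Γ̂^{α₂}_{α₃α₄} = Σ_{α₁,α₂,α₃,α₄} Γ̂^α_{α₁α₂} Γ̂^{α₁}_{α₃α₄} Γ̂^{α₃}_{α₂α₄}; in fact both sides equal Σ_{μ,α₃,α₄} (s⁻¹)^α_μ (s^μ_{α₃})² (s^μ_{α₄})². -/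
/-!
Because `s * s⁻¹ = 1`, contracting the upper index of `Γ̂` with a row of `s` gives
`∑ x, s^μ_x Γ̂^x_{βγ} = s^μ_β s^μ_γ`: in the basis given by `s`, `Γ̂` is the diagonal tensor.
Expanding the outer factor `Γ̂^α_{α₁α₂} = ∑ μ, (s⁻¹)^α_μ s^μ_{α₁} s^μ_{α₂}` puts a row of `s`
against the upper index of each remaining factor, and contracting them one at a time turns
both sides into `∑ μ α₃ α₄, (s⁻¹)^α_μ (s^μ_{α₃})² (s^μ_{α₄})²`.
-/

open Finset

variable {R n : Type*} [CommSemiring R] [Fintype n]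

def factorizedTensor (s t : Matrix n n R) (α β γ : n) : R :=
  ∑ μ, t α μ * s μ β * s μ γ

variable {s t : Matrix n n R}

theorem sum_sum_factorizedTensor_mul (α : n) (G : n → n → R) :
    ∑ β, ∑ γ, factorizedTensor s t α β γ * G β γ =
      ∑ μ, t α μ * ∑ β, ∑ γ, s μ β * s μ γ * G β γ := by
  simp only [factorizedTensor, sum_mul, mul_sum]
  rw [sum_comm_cycle]
  exact sum_congr rfl fun _ _ => sum_congr rfl fun _ _ => sum_congr rfl fun _ _ => by ring

section RightInverse

variable [DecidableEq n] (h : s * t = 1)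
include h

theorem sum_mul_factorizedTensor (μ β γ : n) :
    ∑ x, s μ x * factorizedTensor s t x β γ = s μ β * s μ γ := by
  simp only [factorizedTensor, mul_sum]
  rw [sum_comm]
  calc ∑ ν, ∑ x, s μ x * (t x ν * s ν β * s ν γ)
      = ∑ ν, (s * t) μ ν * (s ν β * s ν γ) := by
        simp only [Matrix.mul_apply, sum_mul, mul_assoc]
    _ = s μ β * s μ γ := by simp [h, Matrix.one_apply]

theorem sum_mul_sum_sum_mul_factorizedTensor (μ : n) (G : n → n → R) :
    ∑ x, s μ x * ∑ β, ∑ γ, G β γ * factorizedTensor s t x β γ =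
      ∑ β, ∑ γ, s μ β * s μ γ * G β γ := by
  calc ∑ x, s μ x * ∑ β, ∑ γ, G β γ * factorizedTensor s t x β γ
      = ∑ β, ∑ γ, G β γ * ∑ x, s μ x * factorizedTensor s t x β γ := by
        simp only [mul_sum]
        rw [← sum_comm_cycle]
        ac_rfl
    _ = ∑ β, ∑ γ, s μ β * s μ γ * G β γ := by
        simp only [sum_mul_factorizedTensor h, mul_comm (G _ _)]

theorem sum_factorizedTensor_mul_mul_eq_sum_sq_mul_sq (α : n) :
    ∑ α₁, ∑ α₂, ∑ α₃, ∑ α₄, factorizedTensor s t α α₁ α₂ * factorizedTensor s t α₁ α₃ α₄ *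
        factorizedTensor s t α₂ α₃ α₄ =
      ∑ μ, ∑ α₃, ∑ α₄, t α μ * s μ α₃ ^ 2 * s μ α₄ ^ 2 := by
  calc _ = ∑ α₁, ∑ α₂, factorizedTensor s t α α₁ α₂ * ∑ α₃, ∑ α₄,
          factorizedTensor s t α₁ α₃ α₄ * factorizedTensor s t α₂ α₃ α₄ := by
        simp only [mul_assoc, mul_sum]
    _ = ∑ μ, t α μ * ∑ α₁, s μ α₁ * ∑ α₂, s μ α₂ * ∑ α₃, ∑ α₄,
          factorizedTensor s t α₁ α₃ α₄ * factorizedTensor s t α₂ α₃ α₄ := by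
        simp only [sum_sum_factorizedTensor_mul, mul_assoc, ← mul_sum]
    _ = ∑ μ, t α μ * ∑ α₃, ∑ α₄, s μ α₃ * s μ α₄ * (s μ α₃ * s μ α₄) := by
        simp only [sum_mul_sum_sum_mul_factorizedTensor h]
    _ = _ := by
        simp only [mul_sum, sq]
        ac_rfl

theorem sum_factorizedTensor_mul_mul_eq_sum_sq_mul_sq' (α : n) :
    ∑ α₁, ∑ α₂, ∑ α₃, ∑ α₄, factorizedTensor s t α α₁ α₂ * factorizedTensor s t α₁ α₃ α₄ *
        factorizedTensor s t α₃ α₂ α₄ =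
      ∑ μ, ∑ α₃, ∑ α₄, t α μ * s μ α₃ ^ 2 * s μ α₄ ^ 2 := by
  calc _ = ∑ α₁, ∑ α₂, factorizedTensor s t α α₁ α₂ * ∑ α₃, ∑ α₄,
          factorizedTensor s t α₁ α₃ α₄ * factorizedTensor s t α₃ α₂ α₄ := by
        simp only [mul_assoc, mul_sum]
    _ = ∑ μ, t α μ * ∑ α₂, s μ α₂ * ∑ α₁, s μ α₁ * ∑ α₃, ∑ α₄,
          factorizedTensor s t α₃ α₂ α₄ * factorizedTensor s t α₁ α₃ α₄ := by
        rw [sum_sum_factorizedTensor_mul]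
        refine sum_congr rfl fun μ _ => ?_
        rw [sum_comm]
        simp only [mul_sum]
        ac_rfl
    _ = ∑ μ, t α μ * ∑ α₂, s μ α₂ * ∑ α₄, s μ α₄ *
          ∑ α₃, s μ α₃ * factorizedTensor s t α₃ α₂ α₄ := by
        simp only [sum_mul_sum_sum_mul_factorizedTensor h]
        refine sum_congr rfl fun μ _ => congrArg _ <| sum_congr rfl fun α₂ _ => congrArg _ ?_
        rw [sum_comm]
        simp only [mul_sum]
        ac_rfl
    _ = _ := by
        simp only [sum_mul_factorizedTensor h, mul_sum, sq]
        ac_rfl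

end RightInverse

theorem stmt_10_general (d : ℕ)
    (s : Matrix (Fin d) (Fin d) ℂ) (hs : IsUnit s)
    (Γhat : Fin d → Fin d → Fin d → ℂ)
    (hΓhat : ∀ α β γ, Γhat α β γ = ∑ μ, s⁻¹ α μ * s μ β * s μ γ) :
    ∀ α, (∑ α₁, ∑ α₂, ∑ α₃, ∑ α₄,
        Γhat α α₁ α₂ * Γhat α₁ α₃ α₄ * Γhat α₂ α₃ α₄ =
          ∑ μ, ∑ α₃, ∑ α₄, s⁻¹ α μ * (s μ α₃) ^ 2 * (s μ α₄) ^ 2) ∧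
      (∑ α₁, ∑ α₂, ∑ α₃, ∑ α₄,
        Γhat α α₁ α₂ * Γhat α₁ α₃ α₄ * Γhat α₃ α₂ α₄ =
          ∑ μ, ∑ α₃, ∑ α₄, s⁻¹ α μ * (s μ α₃) ^ 2 * (s μ α₄) ^ 2) := by
  obtain rfl : Γhat = factorizedTensor s s⁻¹ := by
    funext α β γ
    exact hΓhat α β γ
  have h : s * s⁻¹ = 1 := s.mul_nonsing_inv (s.isUnit_iff_isUnit_det.mp hs)
  exact fun α => ⟨sum_factorizedTensor_mul_mul_eq_sum_sq_mul_sq h α,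
    sum_factorizedTensor_mul_mul_eq_sum_sq_mul_sq' h α⟩

theorem stmt_10 (d : ℕ) (hd : 1 ≤ d)
    (s : Matrix (Fin d) (Fin d) ℂ) (hs : IsUnit s)
    (Γhat : Fin d → Fin d → Fin d → ℂ)
    (hΓhat : ∀ α β γ, Γhat α β γ = ∑ μ, s⁻¹ α μ * s μ β * s μ γ) :
    ∀ α, (∑ α₁, ∑ α₂, ∑ α₃, ∑ α₄,
        Γhat α α₁ α₂ * Γhat α₁ α₃ α₄ * Γhat α₂ α₃ α₄ =
          ∑ μ, ∑ α₃, ∑ α₄, s⁻¹ α μ * (s μ α₃) ^ 2 * (s μ α₄) ^ 2) ∧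
      (∑ α₁, ∑ α₂, ∑ α₃, ∑ α₄,
        Γhat α α₁ α₂ * Γhat α₁ α₃ α₄ * Γhat α₃ α₂ α₄ =
          ∑ μ, ∑ α₃, ∑ α₄, s⁻¹ α μ * (s μ α₃) ^ 2 * (s μ α₄) ^ 2) :=
  stmt_10_general d s hs Γhat hΓhat
end

section
/- For every integer k ≠ 0 and all real t, s, one has ∫_ℝ h_{t−u}(k) · h_{s−u}(−k) du = exp(−2π²k²|t−s|). -/
/-!
For `k ≠ 0` the product `h_{t-u}(k) h_{s-u}(-k)` is the real function
`4π²k² e^{-a(t-u)} e^{-a(s-u)}` (with `a = 2π²k²`) on `u < min t s` and vanishes elsewhere, so the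
integral is an explicit exponential integral over a half-line; `t + s - 2 min t s = |t - s|`
turns its value into `e^{-a|t-s|}`.
-/

open MeasureTheory Set Real

theorem integral_Iio_exp_mul {c : ℝ} (hc : 0 < c) (m : ℝ) :
    ∫ u in Iio m, exp (c * u) = exp (c * m) / c := by
  rw [← integral_Iic_eq_integral_Iio, integral_exp_mul_Iic hc]

theorem integral_one_sided_exp_mul_one_sided_exp {a : ℝ} (ha : 0 < a) (t s : ℝ) :
    ∫ u, (if 0 < t - u then exp (-(a * (t - u))) else 0) *
        (if 0 < s - u then exp (-(a * (s - u))) else 0) =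
      exp (-(a * |t - s|)) / (2 * a) := by
  have h_indicator : ∀ u : ℝ,
      (if 0 < t - u then exp (-(a * (t - u))) else 0) *
          (if 0 < s - u then exp (-(a * (s - u))) else 0) =
        (Iio (min t s)).indicator (fun u ↦ exp (-(a * (t + s))) * exp (2 * a * u)) u := by
    intro u
    by_cases hu : u < min t s
    · rw [indicator_of_mem (mem_Iio.mpr hu)]
      obtain ⟨ht, hs⟩ := lt_min_iff.mp hu
      rw [if_pos (sub_pos.mpr ht), if_pos (sub_pos.mpr hs), ← exp_add, ← exp_add]
      ring_nf
    · rw [indicator_of_notMem (notMem_Iio.mpr (not_lt.mp hu))]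
      rw [lt_min_iff, not_and_or] at hu
      rcases hu with ht | hs
      · rw [if_neg (show ¬0 < t - u by linarith), zero_mul]
      · rw [if_neg (show ¬0 < s - u by linarith), mul_zero]
  have h_exponent : -(a * (t + s)) + 2 * a * min t s = -(a * |t - s|) := by
    rcases le_total t s with hts | hst
    · rw [min_eq_left hts, abs_of_nonpos (by linarith)]; ring
    · rw [min_eq_right hst, abs_of_nonneg (by linarith)]; ring
  simp_rw [h_indicator]
  rw [integral_indicator measurableSet_Iio, integral_const_mul,
    integral_Iio_exp_mul (by positivity), ← h_exponent, exp_add, mul_div_assoc]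

theorem stmt_12
    (H : ℝ → ℤ → ℝ)
    (hH : ∀ r k, H r k =
      if 0 < r ∧ k ≠ 0 then Real.exp (-(2 * Real.pi ^ 2 * (k : ℝ) ^ 2 * r)) else 0)
    (h : ℝ → ℤ → ℂ)
    (hh : ∀ r k, h r k = 2 * Real.pi * Complex.I * (k : ℂ) * (H r k : ℂ))
    (k : ℤ) (hk : k ≠ 0) (t s : ℝ) :
    (∫ u : ℝ, h (t - u) k * h (s - u) (-k)) =
      (Real.exp (-(2 * Real.pi ^ 2 * (k : ℝ) ^ 2 * |t - s|)) : ℂ) := by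
  set a : ℝ := 2 * π ^ 2 * (k : ℝ) ^ 2
  have ha : 0 < a := by positivity
  have hH_k : ∀ r, H r k = if 0 < r then exp (-(a * r)) else 0 := fun r ↦ by
    simp [hH, hk, a]
  have hH_neg_k : ∀ r, H r (-k) = H r k := fun r ↦ by simp [hH]
  have h_product : ∀ u : ℝ, h (t - u) k * h (s - u) (-k) =
      ((2 * a * (H (t - u) k * H (s - u) k) : ℝ) : ℂ) := fun u ↦ by
    rw [hh, hh, hH_neg_k]
    push_cast [a]
    linear_combination (-4 * π ^ 2 * (k : ℂ) ^ 2 * H (t - u) k * H (s - u) k) * Complex.I_sq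
  simp_rw [h_product, hH_k]
  rw [integral_complex_ofReal, integral_const_mul, integral_one_sided_exp_mul_one_sided_exp ha]
  congr 1
  field_simp
end

section
/- Let k₁, k₂ be integers with k₁ ≠ 0, k₂ ≠ 0 and k₁ + k₂ ≠ 0. Then ∫₀^∞ ∫₀^∞ exp(−2π²(k₁+k₂)²(r₁+r₂)) · exp(−2π²(k₁²+k₂²)|r₁−r₂|) dr₁ dr₂ = 1 / (8π⁴ (k₁²+k₁k₂+k₂²)(k₁+k₂)²). -/
/-!
With `a = 2π²(k₁ + k₂)²` and `b = 2π²(k₁² + k₂²)`, split the inner integral at `r₁ = r₂`.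
The part `r₁ > r₂` contributes `e^{-2a r₂}/(a + b)`, and the part `r₁ ≤ r₂` is
`e^{-(a+b) r₂} ∫₀^{r₂} e^{(b-a)s} ds`, whose Laplace transform at `a + b` is `1/((a + b) · 2a)`.
Each part thus integrates to `1/(2a(a + b))`, and `a(a + b) = 8π⁴(k₁² + k₁k₂ + k₂²)(k₁ + k₂)²`.
-/

open Real MeasureTheory Set

theorem integral_exp_mul {c : ℝ} (hc : c ≠ 0) (x y : ℝ) :
    ∫ s in x..y, exp (c * s) = (exp (c * y) - exp (c * x)) / c := by
  rw [intervalIntegral.integral_comp_mul_left (fun s => exp s) hc, integral_exp, smul_eq_mul,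
    inv_mul_eq_div]

theorem integral_Ioi_exp_neg_mul_integral_exp_mul {p c : ℝ} (hp : 0 < p) (hcp : c < p) :
    ∫ r in Ioi 0, exp (-(p * r)) * ∫ s in 0..r, exp (c * s) = 1 / (p * (p - c)) := by
  -- the closed form of `∫ s in 0..r, exp (c * s)` degenerates at `c = 0`, where this is `Γ(2)/p²`
  rcases eq_or_ne c 0 with rfl | hc
  · have hgamma := integral_rpow_mul_exp_neg_mul_Ioi two_pos hp
    norm_num [Gamma_two] at hgamma
    simp only [zero_mul, exp_zero, intervalIntegral.integral_const, sub_zero, smul_eq_mul, mul_one]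
    rw [one_div, ← sq, ← hgamma]
    exact setIntegral_congr_fun measurableSet_Ioi fun r _ => mul_comm _ _
  · have hp' : -p < 0 := by linarith
    have hcp' : c - p < 0 := by linarith
    have hclosed : EqOn (fun r => exp (-(p * r)) * ∫ s in 0..r, exp (c * s))
        (fun r => (exp ((c - p) * r) - exp (-p * r)) / c) (Ioi 0) := fun r _ => by
      dsimp only
      rw [integral_exp_mul hc, mul_zero, exp_zero, sub_mul, exp_sub, neg_mul, exp_neg]
      field_simp
    rw [setIntegral_congr_fun measurableSet_Ioi hclosed, integral_div,
      integral_sub (integrableOn_exp_mul_Ioi hcp' 0) (integrableOn_exp_mul_Ioi hp' 0),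
      integral_exp_mul_Ioi hcp', integral_exp_mul_Ioi hp']
    simp only [mul_zero, exp_zero]
    rw [show c - p = -(p - c) by ring]
    field_simp [(sub_pos.2 hcp).ne']
    ring

section
variable {a b r₂ : ℝ}

theorem exp_mul_exp_abs_eqOn_Iic :
    EqOn (fun r₁ => exp (-(a * (r₁ + r₂))) * exp (-(b * |r₁ - r₂|)))
      (fun r₁ => exp (-((a + b) * r₂)) * exp ((b - a) * r₁)) (Iic r₂) := fun r₁ h => by
  simp only [abs_of_nonpos (sub_nonpos.2 (mem_Iic.1 h)), ← exp_add]
  ring_nf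

theorem exp_mul_exp_abs_eqOn_Ioi :
    EqOn (fun r₁ => exp (-(a * (r₁ + r₂))) * exp (-(b * |r₁ - r₂|)))
      (fun r₁ => exp ((b - a) * r₂) * exp (-(a + b) * r₁)) (Ioi r₂) := fun r₁ h => by
  simp only [abs_of_pos (sub_pos.2 (mem_Ioi.1 h)), ← exp_add]
  ring_nf

theorem integral_Ioi_exp_mul_exp_abs (hab : 0 < a + b) (hr₂ : 0 ≤ r₂) :
    ∫ r₁ in Ioi 0, exp (-(a * (r₁ + r₂))) * exp (-(b * |r₁ - r₂|)) =
      exp (-((a + b) * r₂)) * (∫ s in 0..r₂, exp ((b - a) * s)) +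
        exp (-(2 * a * r₂)) / (a + b) := by
  have hab' : -(a + b) < 0 := neg_neg_of_pos hab
  have hIoi : IntegrableOn (fun r₁ => exp (-(a * (r₁ + r₂))) * exp (-(b * |r₁ - r₂|))) (Ioi r₂) :=
    IntegrableOn.congr_fun ((integrableOn_exp_mul_Ioi hab' r₂).const_mul _)
      exp_mul_exp_abs_eqOn_Ioi.symm measurableSet_Ioi
  rw [← Ioc_union_Ioi_eq_Ioi hr₂, setIntegral_union (Ioc_disjoint_Ioi le_rfl) measurableSet_Ioi
      (Continuous.integrableOn_Ioc (by fun_prop)) hIoi,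
    setIntegral_congr_fun measurableSet_Ioc (exp_mul_exp_abs_eqOn_Iic.mono Ioc_subset_Iic_self),
    setIntegral_congr_fun measurableSet_Ioi exp_mul_exp_abs_eqOn_Ioi, integral_const_mul,
    integral_const_mul, ← intervalIntegral.integral_of_le hr₂, integral_exp_mul_Ioi hab',
    neg_div_neg_eq, mul_div_assoc', ← exp_add]
  ring_nf

theorem integral_Ioi_integral_Ioi_exp_mul_exp_abs (ha : 0 < a) (hab : 0 < a + b) :
    ∫ r₂ in Ioi 0, ∫ r₁ in Ioi 0, exp (-(a * (r₁ + r₂))) * exp (-(b * |r₁ - r₂|)) =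
      1 / (a * (a + b)) := by
  have hlaplace := integral_Ioi_exp_neg_mul_integral_exp_mul hab (c := b - a) (by linarith)
  rw [show a + b - (b - a) = 2 * a by ring] at hlaplace
  have hexp : ∫ r in Ioi 0, exp (-(2 * a * r)) = 1 / (2 * a) := by
    simpa [neg_mul] using integral_exp_mul_Ioi (neg_lt_zero.2 (mul_pos two_pos ha)) 0
  rw [setIntegral_congr_fun measurableSet_Ioi fun r₂ hr₂ =>
      integral_Ioi_exp_mul_exp_abs hab (le_of_lt hr₂),
    integral_add (.of_integral_ne_zero (by rw [hlaplace]; positivity))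
      ((Integrable.of_integral_ne_zero (by rw [hexp]; positivity)).div_const _),
    hlaplace, integral_div, hexp]
  field_simp
  ring
end

theorem stmt_13_general (k₁ k₂ : ℤ) (h12 : k₁ + k₂ ≠ 0) :
    (∫ r₂ in Set.Ioi (0 : ℝ), ∫ r₁ in Set.Ioi (0 : ℝ),
        Real.exp (-(2 * Real.pi ^ 2 * ((k₁ : ℝ) + (k₂ : ℝ)) ^ 2 * (r₁ + r₂))) *
        Real.exp (-(2 * Real.pi ^ 2 * ((k₁ : ℝ) ^ 2 + (k₂ : ℝ) ^ 2) * |r₁ - r₂|))) =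
      1 / (8 * Real.pi ^ 4 *
        ((k₁ : ℝ) ^ 2 + (k₁ : ℝ) * (k₂ : ℝ) + (k₂ : ℝ) ^ 2) *
        ((k₁ : ℝ) + (k₂ : ℝ)) ^ 2) := by
  have hk : ((k₁ : ℝ) + k₂) ≠ 0 := by exact_mod_cast h12
  have ha : 0 < 2 * π ^ 2 * ((k₁ : ℝ) + k₂) ^ 2 := by positivity
  rw [integral_Ioi_integral_Ioi_exp_mul_exp_abs ha (by positivity)]
  congr 1
  ring

theorem stmt_13 (k₁ k₂ : ℤ) (h1 : k₁ ≠ 0) (h2 : k₂ ≠ 0) (h12 : k₁ + k₂ ≠ 0) :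
    (∫ r₂ in Set.Ioi (0 : ℝ), ∫ r₁ in Set.Ioi (0 : ℝ),
        Real.exp (-(2 * Real.pi ^ 2 * ((k₁ : ℝ) + (k₂ : ℝ)) ^ 2 * (r₁ + r₂))) *
        Real.exp (-(2 * Real.pi ^ 2 * ((k₁ : ℝ) ^ 2 + (k₂ : ℝ) ^ 2) * |r₁ - r₂|))) =
      1 / (8 * Real.pi ^ 4 *
        ((k₁ : ℝ) ^ 2 + (k₁ : ℝ) * (k₂ : ℝ) + (k₂ : ℝ) ^ 2) *
        ((k₁ : ℝ) + (k₂ : ℝ)) ^ 2) :=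
  stmt_13_general k₁ k₂ h12
end

section
/- Let λ₁, λ₂ be real numbers with λ₁ ≠ 0 and λ₁λ₂ > 0. Define the tensor Γ on {1,2} by Γ¹₁₁ = λ₁, Γ¹₂₂ = λ₂, Γ¹₁₂ = Γ¹₂₁ = 0, Γ²₁₂ = Γ²₂₁ = λ₁, Γ²₁₁ = Γ²₂₂ = 0, and the matrix s := [[λ₁, √(λ₁λ₂)], [λ₁, −√(λ₁λ₂)]]. Then s is invertible and Γ^α_{βγ} = Σ_{α'} (s⁻¹)^α_{α'} s^{α'}_β s^{α'}_γ for all α,β,γ ∈ {1,2}. -/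
/-
For invertible `s`, the factorization `Γ^α_{βγ} = Σ (s⁻¹)^α_{α'} s^{α'}_β s^{α'}_γ`
says exactly that `s` maps each column `Γ^·_{βγ}` to the entrywise product of the columns
`s^·_β` and `s^·_γ`. For the given `s` these are eight scalar identities, the only
non-linear one being `√(λ₁λ₂)² = λ₁λ₂`; and `det s = -2λ₁√(λ₁λ₂) ≠ 0`.
-/

namespace Matrix

variable {n R : Type*} [Fintype n] [DecidableEq n] [CommRing R]

theorem eq_sum_inv_mul_mul_iff_mulVec_eq {s : Matrix n n R} (hs : IsUnit s)
    (Γ : n → n → n → R) :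
    (∀ α β γ, Γ α β γ = ∑ α', s⁻¹ α α' * s α' β * s α' γ) ↔
      ∀ β γ, s *ᵥ (fun α ↦ Γ α β γ) = fun α' ↦ s α' β * s α' γ := by
  have hdet : IsUnit s.det := (isUnit_iff_isUnit_det s).mp hs
  have hsum (α β γ : n) : ∑ α', s⁻¹ α α' * s α' β * s α' γ =
      (s⁻¹ *ᵥ fun α' ↦ s α' β * s α' γ) α := by
    simp only [mulVec, dotProduct, mul_assoc]
  constructor
  · intro h β γ
    rw [show (fun α ↦ Γ α β γ) = _ from funext fun α ↦ (h α β γ).trans (hsum α β γ),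
      mulVec_mulVec, mul_nonsing_inv s hdet, one_mulVec]
  · intro h α β γ
    rw [hsum, ← h, mulVec_mulVec, nonsing_inv_mul s hdet, one_mulVec]

end Matrix

theorem stmt_17_general (l₁ l₂ : ℝ) (h2 : 0 < l₁ * l₂)
    (Γ : Fin 2 → Fin 2 → Fin 2 → ℝ)
    (hΓ : Γ 0 0 0 = l₁ ∧ Γ 0 1 1 = l₂ ∧ Γ 0 0 1 = 0 ∧ Γ 0 1 0 = 0 ∧
          Γ 1 0 1 = l₁ ∧ Γ 1 1 0 = l₁ ∧ Γ 1 0 0 = 0 ∧ Γ 1 1 1 = 0)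
    (s : Matrix (Fin 2) (Fin 2) ℝ)
    (hs : s = !![l₁, Real.sqrt (l₁ * l₂); l₁, -Real.sqrt (l₁ * l₂)]) :
    IsUnit s ∧ ∀ α β γ, Γ α β γ = ∑ α', s⁻¹ α α' * s α' β * s α' γ := by
  obtain ⟨e000, e011, e001, e010, e101, e110, e100, e111⟩ := hΓ
  set r := Real.sqrt (l₁ * l₂)
  have hl₁ : l₁ ≠ 0 := left_ne_zero_of_mul h2.ne'
  have hr : r ≠ 0 := (Real.sqrt_pos.mpr h2).ne'
  have hrr : r * r = l₁ * l₂ := Real.mul_self_sqrt h2.le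
  have hu : IsUnit s := by
    rw [Matrix.isUnit_iff_isUnit_det, hs, Matrix.det_fin_two_of, isUnit_iff_ne_zero,
      show l₁ * -r - r * l₁ = -2 * l₁ * r by ring]
    exact mul_ne_zero (mul_ne_zero (by norm_num) hl₁) hr
  refine ⟨hu, (Matrix.eq_sum_inv_mul_mul_iff_mulVec_eq hu Γ).mpr fun β γ ↦ ?_⟩
  ext α
  fin_cases α <;> fin_cases β <;> fin_cases γ <;>
    simp [hs, Matrix.mulVec, dotProduct, e000, e011, e001, e010, e101, e110, e100, e111, hrr] <;>
    ring

theorem stmt_17 (l₁ l₂ : ℝ) (h1 : l₁ ≠ 0) (h2 : 0 < l₁ * l₂)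
    (Γ : Fin 2 → Fin 2 → Fin 2 → ℝ)
    (hΓ : Γ 0 0 0 = l₁ ∧ Γ 0 1 1 = l₂ ∧ Γ 0 0 1 = 0 ∧ Γ 0 1 0 = 0 ∧
          Γ 1 0 1 = l₁ ∧ Γ 1 1 0 = l₁ ∧ Γ 1 0 0 = 0 ∧ Γ 1 1 1 = 0)
    (s : Matrix (Fin 2) (Fin 2) ℝ)
    (hs : s = !![l₁, Real.sqrt (l₁ * l₂); l₁, -Real.sqrt (l₁ * l₂)]) :
    IsUnit s ∧ ∀ α β γ, Γ α β γ = ∑ α', s⁻¹ α α' * s α' β * s α' γ :=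
  stmt_17_general l₁ l₂ h2 Γ hΓ s hs
end

section
/- Define the tensor Γ on {1,2} by Γ¹ = [[2,1],[1,1]] and Γ² = [[1,1],[1,2]] (i.e. Γ¹₁₁ = 2, Γ¹₁₂ = Γ¹₂₁ = 1, Γ¹₂₂ = 1, Γ²₁₁ = 1, Γ²₁₂ = Γ²₂₁ = 1, Γ²₂₂ = 2). Then (a) Γ is fully symmetric, i.e. Γ^α_{βγ} is invariant under all permutations of (α,β,γ); but (b) there exists no invertible complex 2×2 matrix s such that Γ^α_{βγ} = Σ_{α'} (s⁻¹)^α_{α'} s^{α'}_β s^{α'}_γ for all α,β,γ ∈ {1,2}. -/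
/-!
Multiplying the factorization by `s` turns it into `s^i_β s^i_γ = Σ_α s^i_α Γ^α_{βγ}`: every row of
`s` is a character of the commutative algebra with basis `e_β` and product
`e_β e_γ = Σ_α Γ^α_{βγ} e_α`. For the tensor at hand this algebra has only the zero character
(as soon as `2 ≠ 0`), so `s = 0`, which is not invertible.
-/

open Matrix

/-- `r` is a character of the algebra with structure constants `e_β e_γ = Σ_α Γ α β γ • e_α`. -/
def IsCharacter {ι K : Type*} [Fintype ι] [CommSemiring K] (Γ : ι → ι → ι → K) (r : ι → K) :
    Prop :=
  ∀ β γ, r β * r γ = ∑ α, r α * Γ α β γ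

theorem isCharacter_row_of_factorization {ι K : Type*} [Fintype ι] [DecidableEq ι] [CommRing K]
    {Γ : ι → ι → ι → K} {s : Matrix ι ι K} (hs : IsUnit s)
    (h : ∀ α β γ, Γ α β γ = ∑ α', s⁻¹ α α' * s α' β * s α' γ) (i : ι) :
    IsCharacter Γ (s i) := by
  intro β γ
  have hΓ : (fun α => Γ α β γ) = s⁻¹ *ᵥ fun α' => s α' β * s α' γ :=
    funext fun α => by simp only [h, mulVec, dotProduct, mul_assoc]
  have hrow : (fun α' => s α' β * s α' γ) = s *ᵥ fun α => Γ α β γ := by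
    rw [hΓ, mulVec_mulVec, mul_nonsing_inv _ ((isUnit_iff_isUnit_det s).mp hs), one_mulVec]
  exact congrFun hrow i

def counterexampleTensor (K : Type*) [Semiring K] : Fin 2 → Fin 2 → Fin 2 → K :=
  ![![![2, 1], ![1, 1]], ![![1, 1], ![1, 2]]]

theorem counterexampleTensor_symm (K : Type*) [Semiring K] (α β γ : Fin 2) :
    counterexampleTensor K α β γ = counterexampleTensor K α γ β ∧
      counterexampleTensor K α β γ = counterexampleTensor K β α γ := by
  fin_cases α <;> fin_cases β <;> fin_cases γ <;> exact ⟨rfl, rfl⟩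

theorem map_counterexampleTensor {R S : Type*} [Semiring R] [Semiring S] (f : R →+* S)
    (α β γ : Fin 2) : f (counterexampleTensor R α β γ) = counterexampleTensor S α β γ := by
  fin_cases α <;> fin_cases β <;> fin_cases γ <;> simp [counterexampleTensor, map_ofNat]

theorem eq_zero_of_isCharacter_counterexampleTensor {K : Type*} [CommRing K] [NoZeroDivisors K]
    (h2 : (2 : K) ≠ 0) {r : Fin 2 → K} (hr : IsCharacter (counterexampleTensor K) r) : r = 0 := by
  have h00 := hr 0 0
  have h01 := hr 0 1
  have h11 := hr 1 1
  norm_num [counterexampleTensor, Fin.sum_univ_two] at h00 h01 h11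
  have hr0 : r 0 = 0 := by
    have : 2 * r 0 = 0 := by
      linear_combination (r 0 - r 0 * r 1 - 1 + r 1) * h00 + (r 0 ^ 2 - 2 * r 0 - 1) * h01 +
        (1 - r 0) * h11
    simpa [h2] using this
  have hr1 : r 1 = 0 := by linear_combination (r 0 - 2) * hr0 - h00
  ext i
  fin_cases i <;> assumption

theorem stmt_18 (Γ : Fin 2 → Fin 2 → Fin 2 → ℝ)
    (hΓ : Γ 0 0 0 = 2 ∧ Γ 0 0 1 = 1 ∧ Γ 0 1 0 = 1 ∧ Γ 0 1 1 = 1 ∧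
          Γ 1 0 0 = 1 ∧ Γ 1 0 1 = 1 ∧ Γ 1 1 0 = 1 ∧ Γ 1 1 1 = 2) :
    (∀ α β γ, Γ α β γ = Γ α γ β ∧ Γ α β γ = Γ β α γ) ∧
      ¬ ∃ s : Matrix (Fin 2) (Fin 2) ℂ, IsUnit s ∧
        ∀ α β γ, (Γ α β γ : ℂ) = ∑ α', s⁻¹ α α' * s α' β * s α' γ := by
  obtain rfl : Γ = counterexampleTensor ℝ := by
    funext α β γ
    fin_cases α <;> fin_cases β <;> fin_cases γ <;> simp [counterexampleTensor, hΓ]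
  refine ⟨counterexampleTensor_symm ℝ, ?_⟩
  rintro ⟨s, hs, h⟩
  simp only [← Complex.ofRealHom_eq_coe, map_counterexampleTensor] at h
  have hs0 : s = 0 := funext fun i =>
    eq_zero_of_isCharacter_counterexampleTensor two_ne_zero
      (isCharacter_row_of_factorization hs h i)
  exact not_isUnit_zero (hs0 ▸ hs)
end

section
/- Under the trilinear condition, the matrices F and G coincide and are given by F^{βγ} = G^{βγ} = Σ_{α₁,α₂,β₁,β₂} σ^β_{α₁} σ^γ_{α₂} Γ̂^{α₁}_{β₁β₂} Γ̂^{α₂}_{β₁β₂} for all 1 ≤ β,γ ≤ d. -/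
/-!
Contracting the upper index of `Γhat` with `σ` undoes the `τ` in its definition, so
`E α β γ = ∑ a, σ α a * Γhat a β γ`. Substituting this into both factors of `F` gives the
`Γhat`-formula. Substituting it into one factor of `F`, and into the factor `E` of `G`, writes
both as `∑ a, σ γ a * ∑ b, ∑ c, E β b c * T a b c`, with `T a b c = Γhat a b c` for `F` and
`T a b c = Γhat b a c` for `G`; these agree because the trilinear condition makes `Γhat`
symmetric in its first two indices.
-/

open Finset Matrix

section
variable {ι R : Type*} [Fintype ι] [CommSemiring R]
  {Γ Γhat E : ι → ι → ι → R} {σ τ : Matrix ι ι R}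

theorem hat_eq_mulVec
    (hΓhat : ∀ α β γ, Γhat α β γ =
      ∑ α', ∑ β', ∑ γ', τ α α' * Γ α' β' γ' * σ β' β * σ γ' γ)
    (hE : ∀ α β₁ β₂, E α β₁ β₂ = ∑ γ₁, ∑ γ₂, Γ α γ₁ γ₂ * σ γ₁ β₁ * σ γ₂ β₂) (β γ : ι) :
    (fun α => Γhat α β γ) = τ *ᵥ fun α => E α β γ := by
  ext α
  simp only [hΓhat, hE, mulVec, dotProduct, mul_sum, mul_assoc]

theorem eq_sum_mul_hat [DecidableEq ι]
    (hΓhat : ∀ α β γ, Γhat α β γ =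
      ∑ α', ∑ β', ∑ γ', τ α α' * Γ α' β' γ' * σ β' β * σ γ' γ)
    (hE : ∀ α β₁ β₂, E α β₁ β₂ = ∑ γ₁, ∑ γ₂, Γ α γ₁ γ₂ * σ γ₁ β₁ * σ γ₂ β₂)
    (hστ : σ * τ = 1) (α β γ : ι) :
    E α β γ = ∑ a, σ α a * Γhat a β γ := by
  have h : (fun α => E α β γ) = σ *ᵥ fun α => Γhat α β γ := by
    rw [hat_eq_mulVec hΓhat hE, mulVec_mulVec, hστ, one_mulVec]
  exact congrFun h α

variable (hkey : ∀ α β γ, E α β γ = ∑ a, σ α a * Γhat a β γ)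
include hkey

theorem sum_mul_eq_sum_mul_sum_mul_hat (β γ : ι) :
    ∑ b, ∑ c, E β b c * E γ b c = ∑ a, σ γ a * ∑ b, ∑ c, E β b c * Γhat a b c := by
  simp only [hkey γ, mul_sum]
  rw [sum_comm_cycle]
  exact sum_congr rfl fun _ _ => sum_congr rfl fun _ _ => sum_congr rfl fun _ _ => by ring

theorem sum_mul_eq_sum_mul_hat_mul_hat (β γ : ι) :
    ∑ b, ∑ c, E β b c * E γ b c =
      ∑ α₁, ∑ α₂, ∑ b, ∑ c, σ β α₁ * σ γ α₂ * Γhat α₁ b c * Γhat α₂ b c := by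
  simp only [hkey, sum_mul_sum]
  rw [sum_comm_cycle]
  refine sum_congr rfl fun _ _ => ?_
  rw [sum_comm_cycle]
  exact sum_congr rfl fun _ _ => sum_congr rfl fun _ _ => sum_congr rfl fun _ _ => by ring

theorem sum_mul_mul_mul_eq_sum_mul_sum_mul_hat
    (hE : ∀ α β₁ β₂, E α β₁ β₂ = ∑ γ₁, ∑ γ₂, Γ α γ₁ γ₂ * σ γ₁ β₁ * σ γ₂ β₂) (β γ : ι) :
    ∑ β₁, ∑ β₂, ∑ γ₁, ∑ γ₂, Γ β γ₁ γ₂ * E γ₁ β₁ β₂ * σ γ₂ β₂ * σ γ β₁ =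
      ∑ β₁, σ γ β₁ * ∑ a, ∑ β₂, E β a β₂ * Γhat a β₁ β₂ := by
  refine sum_congr rfl fun β₁ _ => ?_
  simp only [hkey _ β₁, hE, mul_sum, sum_mul]
  refine (sum_congr rfl fun _ _ => sum_comm_cycle).trans ?_
  rw [sum_comm]
  exact sum_congr rfl fun _ _ => sum_congr rfl fun _ _ =>
    sum_congr rfl fun _ _ => sum_congr rfl fun _ _ => by ring

end

theorem stmt_19_general (d : ℕ)
    (Γ : Fin d → Fin d → Fin d → ℝ)
    (σ τ : Matrix (Fin d) (Fin d) ℝ)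
    (hστ : σ * τ = 1)
    (Γhat : Fin d → Fin d → Fin d → ℝ)
    (hΓhat : ∀ α β γ, Γhat α β γ =
      ∑ α', ∑ β', ∑ γ', τ α α' * Γ α' β' γ' * σ β' β * σ γ' γ)
    (htri : ∀ α β γ, Γhat α β γ = Γhat α γ β ∧ Γhat α β γ = Γhat β γ α)
    (E : Fin d → Fin d → Fin d → ℝ)
    (hE : ∀ α β₁ β₂, E α β₁ β₂ = ∑ γ₁, ∑ γ₂, Γ α γ₁ γ₂ * σ γ₁ β₁ * σ γ₂ β₂)
    (F G : Fin d → Fin d → ℝ)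
    (hF : ∀ β γ, F β γ = ∑ γ₁, ∑ γ₂, E β γ₁ γ₂ * E γ γ₁ γ₂)
    (hG : ∀ β γ, G β γ = ∑ β₁, ∑ β₂, ∑ γ₁, ∑ γ₂,
      Γ β γ₁ γ₂ * E γ₁ β₁ β₂ * σ γ₂ β₂ * σ γ β₁) :
    ∀ β γ, F β γ = G β γ ∧
      F β γ = ∑ α₁, ∑ α₂, ∑ β₁, ∑ β₂,
        σ β α₁ * σ γ α₂ * Γhat α₁ β₁ β₂ * Γhat α₂ β₁ β₂ := by
  have hkey := eq_sum_mul_hat hΓhat hE hστ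
  have hswap (a b c) : Γhat b a c = Γhat a b c := by rw [(htri b a c).2, (htri a c b).1]
  intro β γ
  refine ⟨?_, by rw [hF, sum_mul_eq_sum_mul_hat_mul_hat hkey]⟩
  rw [hF, hG, sum_mul_eq_sum_mul_sum_mul_hat hkey, sum_mul_mul_mul_eq_sum_mul_sum_mul_hat hkey hE]
  refine sum_congr rfl fun a _ => ?_
  simp only [hswap a]

theorem stmt_19 (d : ℕ) (hd : 1 ≤ d)
    (Γ : Fin d → Fin d → Fin d → ℝ)
    (hΓsym : ∀ α β γ, Γ α β γ = Γ α γ β)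
    (σ τ : Matrix (Fin d) (Fin d) ℝ)
    (hστ : σ * τ = 1) (hτσ : τ * σ = 1)
    (Γhat : Fin d → Fin d → Fin d → ℝ)
    (hΓhat : ∀ α β γ, Γhat α β γ =
      ∑ α', ∑ β', ∑ γ', τ α α' * Γ α' β' γ' * σ β' β * σ γ' γ)
    (htri : ∀ α β γ, Γhat α β γ = Γhat α γ β ∧ Γhat α β γ = Γhat β γ α)
    (E : Fin d → Fin d → Fin d → ℝ)
    (hE : ∀ α β₁ β₂, E α β₁ β₂ = ∑ γ₁, ∑ γ₂, Γ α γ₁ γ₂ * σ γ₁ β₁ * σ γ₂ β₂)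
    (F G : Fin d → Fin d → ℝ)
    (hF : ∀ β γ, F β γ = ∑ γ₁, ∑ γ₂, E β γ₁ γ₂ * E γ γ₁ γ₂)
    (hG : ∀ β γ, G β γ = ∑ β₁, ∑ β₂, ∑ γ₁, ∑ γ₂,
      Γ β γ₁ γ₂ * E γ₁ β₁ β₂ * σ γ₂ β₂ * σ γ β₁) :
    ∀ β γ, F β γ = G β γ ∧
      F β γ = ∑ α₁, ∑ α₂, ∑ β₁, ∑ β₂,
        σ β α₁ * σ γ α₂ * Γhat α₁ β₁ β₂ * Γhat α₂ β₁ β₂ :=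
  stmt_19_general d Γ σ τ hστ Γhat hΓhat htri E hE F G hF hG
end
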